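/- arXiv:1902.09452 — 3 statements merged into one kernel-verified Lean document; each statement's English description precedes it below -/
import Mathlib

section
/- Let a, b, c : ℝ² → ℝ be real-analytic at a point (x₀, y₀), let φ : ℝ → ℝ be real-analytic at x₀ and ψ : ℝ → ℝ real-analytic at y₀, with the compatibility condition φ(x₀) = ψ(y₀). Then there exist an open neighborhood U of (x₀, y₀) and a function z : ℝ² → ℝ, real-analytic on U, such that ∂²z/∂x∂y + a·∂z/∂x + b·∂z/∂y + c·z = 0 on U, z(x, y₀) = φ(x) for all x with (x, y₀) ∈ U, and z(x₀, y) = ψ(y) for all y with (x₀, y) ∈ U. -/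
/-!
Expand `a`, `b`, `c` and the boundary data (viewed as functions of `(x, y)`) in double power
series in `X = x - x₀`, `Y = y - y₀`. The coefficient of `X^m Y^n` in
`z_xy + a z_x + b z_y + c z` is `(m+1)(n+1) u_{m+1,n+1}` plus terms involving only coefficients
`u_{ij}` with `i + j ≤ m + n + 1`, so the equation together with `u_{m0} = φ_m`, `u_{0n} = ψ_n`
(consistent at `(0,0)` because `φ x₀ = ψ y₀`) determines the coefficients `u` recursively.
If the coefficients of `a`, `b`, `c` are absolutely summable against `ρ^(i+j)`, an induction on
`m + n` gives `|u_{mn}| ≤ M K^(m+n)`, so the series of `z` converges on the sup-norm ball of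
radius `1/K`. There it can be differentiated termwise and multiplied by Cauchy products, hence
solves the equation, and, being a convergent power series, it is analytic.
-/

/-- Partial derivative in the first variable. -/
noncomputable def pdx (f : ℝ × ℝ → ℝ) (p : ℝ × ℝ) : ℝ :=
  deriv (fun x => f (x, p.2)) p.1

/-- Partial derivative in the second variable. -/
noncomputable def pdy (f : ℝ × ℝ → ℝ) (p : ℝ × ℝ) : ℝ :=
  deriv (fun y => f (p.1, y)) p.2

/-- Mixed second partial derivative `∂²f/∂x∂y` (first in `x`, then in `y`). -/
noncomputable def pdxy (f : ℝ × ℝ → ℝ) (p : ℝ × ℝ) : ℝ :=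
  pdy (fun q => pdx f q) p

open Finset Filter Topology

lemma exists_add_one_mul_pow_le {t : ℝ} (h0 : 0 ≤ t) (h1 : t < 1) :
    ∃ C, ∀ n : ℕ, (n + 1) * t ^ n ≤ C := by
  obtain ⟨C, hC⟩ := ((tendsto_self_mul_const_pow_of_lt_one h0 h1).add
    (tendsto_pow_atTop_nhds_zero_of_lt_one h0 h1)).bddAbove_range
  exact ⟨C, fun n => by simpa [add_mul] using hC ⟨n, rfl⟩⟩

lemma pow_le_pow_mul_pow {K ρ : ℝ} (hK : 1 ≤ K) (hKρ : 1 ≤ K * ρ) {e d E : ℕ} (h : e + d ≤ E) :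
    K ^ e ≤ K ^ E * ρ ^ d := by
  have hρ : 0 ≤ ρ := (pos_of_mul_pos_right (by linarith : 0 < K * ρ) (by linarith)).le
  calc K ^ e ≤ K ^ e * (K * ρ) ^ d := le_mul_of_one_le_right (by positivity) (one_le_pow₀ hKρ)
    _ = K ^ (e + d) * ρ ^ d := by ring
    _ ≤ K ^ E * ρ ^ d := by gcongr

lemma prod_piecewise_const {ι : Type*} [Fintype ι] [DecidableEq ι] (s : Finset ι) (a b : ℝ) :
    ∏ i, s.piecewise (fun _ => a) (fun _ => b) i = a ^ #s * b ^ (Fintype.card ι - #s) := by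
  rw [prod_piecewise, univ_inter, prod_const, prod_const, ← compl_eq_univ_sdiff, card_compl]

noncomputable section

instance : HasAntidiagonal (ℕ × ℕ) := HasAntidiagonal.antidiagonalOfLocallyFinite

namespace DoubleSeries

def term (v : ℕ × ℕ → ℝ) (x : ℝ × ℝ) (q : ℕ × ℕ) : ℝ := v q * x.1 ^ q.1 * x.2 ^ q.2

def eval (v : ℕ × ℕ → ℝ) (x : ℝ × ℝ) : ℝ := ∑' q, term v x q

def AbsSummableAt (v : ℕ × ℕ → ℝ) (r : ℝ) : Prop :=
  Summable fun q => |v q| * r ^ q.1 * r ^ q.2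

def normAt (v : ℕ × ℕ → ℝ) (r : ℝ) : ℝ := ∑' q, |v q| * r ^ q.1 * r ^ q.2

def ConvergesBelow (v : ℕ × ℕ → ℝ) (R : ℝ) : Prop :=
  ∀ r, 0 ≤ r → r < R → AbsSummableAt v r

def derivFst (v : ℕ × ℕ → ℝ) (q : ℕ × ℕ) : ℝ := (q.1 + 1) * v (q.1 + 1, q.2)

def derivSnd (v : ℕ × ℕ → ℝ) (q : ℕ × ℕ) : ℝ := (q.2 + 1) * v (q.1, q.2 + 1)

def swap (v : ℕ × ℕ → ℝ) (q : ℕ × ℕ) : ℝ := v q.swap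

def mul (v w : ℕ × ℕ → ℝ) (q : ℕ × ℕ) : ℝ := ∑ ij ∈ antidiagonal q, v ij.1 * w ij.2

variable {v w : ℕ × ℕ → ℝ} {r R : ℝ} {x : ℝ × ℝ}

lemma AbsSummableAt.summable_abs_term (hv : AbsSummableAt v r) (hx : ‖x‖ ≤ r) :
    Summable fun q => |term v x q| := by
  refine hv.of_nonneg_of_le (fun _ => abs_nonneg _) fun q => ?_
  have h1 : |x.1| ≤ r := (norm_fst_le x).trans hx
  have h2 : |x.2| ≤ r := (norm_snd_le x).trans hx
  have hr : 0 ≤ r := (norm_nonneg x).trans hx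
  simp only [term, abs_mul, abs_pow]
  gcongr

lemma normAt_nonneg (hr : 0 ≤ r) : 0 ≤ normAt v r :=
  tsum_nonneg fun _ => by positivity

lemma ConvergesBelow.mono (hv : ConvergesBelow v R) (hr : r ≤ R) : ConvergesBelow v r :=
  fun s hs hsr => hv s hs (hsr.trans_le hr)

lemma ConvergesBelow.summable_abs_term (hv : ConvergesBelow v R) (hx : ‖x‖ < R) :
    Summable fun q => |term v x q| :=
  (hv ‖x‖ (norm_nonneg x) hx).summable_abs_term le_rfl

lemma ConvergesBelow.summable_term (hv : ConvergesBelow v R) (hx : ‖x‖ < R) :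
    Summable (term v x) :=
  (hv.summable_abs_term hx).of_abs

lemma AbsSummableAt.swap (hv : AbsSummableAt v r) : AbsSummableAt (swap v) r :=
  ((Equiv.prodComm ℕ ℕ).summable_iff.2 hv).congr fun q => by
    simp only [Function.comp_apply, Equiv.prodComm_apply, DoubleSeries.swap, Prod.fst_swap,
      Prod.snd_swap]
    ring

lemma ConvergesBelow.swap (hv : ConvergesBelow v R) : ConvergesBelow (swap v) R :=
  fun r hr hrR => (hv r hr hrR).swap

lemma eval_swap (v : ℕ × ℕ → ℝ) (x : ℝ × ℝ) : eval (swap v) x.swap = eval v x := by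
  rw [eval, eval, ← (Equiv.prodComm ℕ ℕ).tsum_eq]
  refine tsum_congr fun q => ?_
  simp only [term, DoubleSeries.swap, Equiv.prodComm_apply, Prod.fst_swap, Prod.snd_swap,
    Prod.swap_swap]
  ring

lemma derivSnd_eq_swap (v : ℕ × ℕ → ℝ) : derivSnd v = swap (derivFst (swap v)) := rfl

lemma term_mul (v w : ℕ × ℕ → ℝ) (x : ℝ × ℝ) (q : ℕ × ℕ) :
    term (mul v w) x q = ∑ ij ∈ antidiagonal q, term v x ij.1 * term w x ij.2 := by
  rw [term, mul, sum_mul, sum_mul]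
  refine sum_congr rfl fun ij hij => ?_
  rw [HasAntidiagonal.mem_antidiagonal] at hij
  subst hij
  simp only [term, Prod.fst_add, Prod.snd_add, pow_add]
  ring

lemma hasSum_term_mul (hv : ConvergesBelow v R) (hw : ConvergesBelow w R)
    (hx : ‖x‖ < R) : HasSum (term (mul v w) x) (eval v x * eval w x) := by
  have hv' := hv.summable_abs_term hx
  have hw' := hw.summable_abs_term hx
  have hvw := summable_mul_of_summable_norm (f := term v x) (g := term w x) hv' hw'
  rw [funext (term_mul v w x), eval, eval,
    hv'.of_abs.tsum_mul_tsum_eq_tsum_sum_antidiagonal hw'.of_abs hvw]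
  exact (summable_sum_mul_antidiagonal_of_summable_mul hvw).hasSum

lemma mul_apply_eq_sum_range (v w : ℕ × ℕ → ℝ) (m n : ℕ) :
    mul v w (m, n) = ∑ q ∈ range (m + 1) ×ˢ range (n + 1), v q * w (m - q.1, n - q.2) := by
  rw [mul]
  symm
  refine sum_nbij' (fun q => (q, (m - q.1, n - q.2))) (fun ij => ij.1) ?_ ?_ ?_ ?_ ?_ <;>
    simp only [HasAntidiagonal.mem_antidiagonal, mem_product, mem_range, Prod.forall,
      Prod.ext_iff, Prod.fst_add, Prod.snd_add]
  all_goals grind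

lemma hasSum_sum_antidiagonal {f : ℕ × ℕ → ℝ} {a : ℝ} (hf : HasSum f a) :
    HasSum (fun k => ∑ q ∈ antidiagonal k, f q) a :=
  ((HasAntidiagonal.sigmaAntidiagonalEquivProd (A := ℕ)).hasSum_iff.2 hf).sigma fun k => by
    simpa [sum_attach] using hasSum_fintype fun q : antidiagonal k => f q

lemma summable_of_summable_sum_antidiagonal {f : ℕ × ℕ → ℝ} (hf : ∀ q, 0 ≤ f q)
    (h : Summable fun k => ∑ q ∈ antidiagonal k, f q) : Summable f :=
  (HasAntidiagonal.sigmaAntidiagonalEquivProd (A := ℕ)).summable_iff.1 <|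
    (summable_sigma_of_nonneg fun _ => hf _).2
      ⟨fun _ => .of_finite, by simpa [tsum_fintype, sum_attach] using h⟩

lemma AbsSummableAt.abs_sum_mul_le {t : ℕ × ℕ → ℝ} {ρ C : ℝ}
    (hw : AbsSummableAt w ρ) (hρ : 0 ≤ ρ) (hC : 0 ≤ C) (s : Finset (ℕ × ℕ))
    (ht : ∀ q ∈ s, |t q| ≤ C * (ρ ^ q.1 * ρ ^ q.2)) :
    |∑ q ∈ s, w q * t q| ≤ C * normAt w ρ :=
  calc |∑ q ∈ s, w q * t q| ≤ ∑ q ∈ s, |w q| * |t q| := by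
        simpa only [abs_mul] using abs_sum_le_sum_abs (fun q => w q * t q) s
    _ ≤ ∑ q ∈ s, C * (|w q| * ρ ^ q.1 * ρ ^ q.2) := sum_le_sum fun q hq => by
        rw [show C * (|w q| * ρ ^ q.1 * ρ ^ q.2) = |w q| * (C * (ρ ^ q.1 * ρ ^ q.2)) by ring]
        exact mul_le_mul_of_nonneg_left (ht q hq) (abs_nonneg _)
    _ ≤ C * normAt w ρ := by
        rw [← mul_sum]
        exact mul_le_mul_of_nonneg_left (hw.sum_le_tsum s fun _ _ => by positivity) hC

lemma AbsSummableAt.abs_le {ρ K : ℝ} (hv : AbsSummableAt v ρ) (hρ : 0 ≤ ρ) (hKρ : 1 ≤ K * ρ)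
    (q : ℕ × ℕ) : |v q| ≤ normAt v ρ * K ^ (q.1 + q.2) :=
  calc |v q| ≤ |v q| * (K * ρ) ^ (q.1 + q.2) :=
        le_mul_of_one_le_right (abs_nonneg _) (one_le_pow₀ hKρ)
    _ = K ^ (q.1 + q.2) * (|v q| * ρ ^ q.1 * ρ ^ q.2) := by ring
    _ ≤ K ^ (q.1 + q.2) * normAt v ρ := by
        have hK : 0 ≤ K := (pos_of_mul_pos_left (by linarith : 0 < K * ρ) hρ).le
        exact mul_le_mul_of_nonneg_left (hv.le_tsum q fun _ _ => by positivity) (by positivity)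
    _ = normAt v ρ * K ^ (q.1 + q.2) := mul_comm _ _

lemma convergesBelow_of_abs_le {K M : ℝ} (hK : 0 < K)
    (h : ∀ q, |v q| ≤ M * K ^ (q.1 + q.2)) : ConvergesBelow v K⁻¹ := fun r hr hrK => by
  have hKr : K * r < 1 := by rwa [← lt_inv_mul_iff₀ hK, mul_one]
  have hgeom := summable_geometric_of_lt_one (by positivity) hKr
  refine ((hgeom.mul_of_nonneg hgeom (fun _ => by positivity) fun _ => by positivity).mul_left M
    ).of_nonneg_of_le (fun _ => by positivity) fun q => ?_
  calc |v q| * r ^ q.1 * r ^ q.2 ≤ M * K ^ (q.1 + q.2) * r ^ q.1 * r ^ q.2 := by gcongr; exact h q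
    _ = M * ((K * r) ^ q.1 * (K * r) ^ q.2) := by ring

lemma injective_shiftFst : Function.Injective fun q : ℕ × ℕ => (q.1 + 1, q.2) :=
  fun a b h => by simpa [Prod.ext_iff] using h

lemma mem_range_shiftFst {q : ℕ × ℕ} (hq : q.1 ≠ 0) :
    q ∈ Set.range fun q : ℕ × ℕ => (q.1 + 1, q.2) :=
  ⟨(q.1 - 1, q.2), by ext <;> simp; omega⟩

lemma summable_shiftFst_iff {f : ℕ × ℕ → ℝ} (hf : ∀ n, f (0, n) = 0) :
    (Summable fun q : ℕ × ℕ => f (q.1 + 1, q.2)) ↔ Summable f :=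
  injective_shiftFst.summable_iff fun q hq => by
    by_contra hfq
    exact hq (mem_range_shiftFst fun h => hfq (by rw [← hf q.2, ← h]))

lemma tsum_shiftFst {f : ℕ × ℕ → ℝ} (hf : ∀ n, f (0, n) = 0) :
    ∑' q : ℕ × ℕ, f (q.1 + 1, q.2) = ∑' q, f q :=
  injective_shiftFst.tsum_eq fun q hq =>
    mem_range_shiftFst fun h => hq (by rw [← hf q.2, ← h])

lemma AbsSummableAt.derivFst (hv : AbsSummableAt v R) (hr : 0 ≤ r) (hrR : r < R) :
    AbsSummableAt (derivFst v) r := by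
  have hR : 0 < R := hr.trans_lt hrR
  obtain ⟨C, hC⟩ := exists_add_one_mul_pow_le (div_nonneg hr hR.le) ((div_lt_one hR).2 hrR)
  have hC0 : 0 ≤ C := le_trans (by positivity) (hC 0)
  refine ((hv.comp_injective injective_shiftFst).mul_left (C / R)).of_nonneg_of_le
    (fun _ => by positivity) fun q => ?_
  have hq1 : (q.1 + 1) * r ^ q.1 ≤ C * R ^ q.1 := by
    have := mul_le_mul_of_nonneg_right (hC q.1) (pow_nonneg hR.le q.1)
    rwa [div_pow, mul_assoc, div_mul_cancel₀ _ (pow_ne_zero _ hR.ne')] at this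
  calc |DoubleSeries.derivFst v q| * r ^ q.1 * r ^ q.2
      = |v (q.1 + 1, q.2)| * ((q.1 + 1) * r ^ q.1) * r ^ q.2 := by
        rw [DoubleSeries.derivFst, abs_mul, abs_of_nonneg (by positivity)]; ring
    _ ≤ |v (q.1 + 1, q.2)| * (C * R ^ q.1) * R ^ q.2 := by gcongr
    _ = C / R * (|v (q.1 + 1, q.2)| * R ^ (q.1 + 1) * R ^ q.2) := by
        field_simp; ring

lemma ConvergesBelow.derivFst (hv : ConvergesBelow v R) : ConvergesBelow (derivFst v) R :=
  fun r hr hrR => by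
    obtain ⟨s, hrs, hsR⟩ := exists_between hrR
    exact (hv s (hr.trans hrs.le) hsR).derivFst hr hrs

lemma ConvergesBelow.derivSnd (hv : ConvergesBelow v R) : ConvergesBelow (derivSnd v) R :=
  hv.swap.derivFst.swap

lemma hasDerivAt_eval_fst (hv : ConvergesBelow v R) (hx : ‖x‖ < R) :
    HasDerivAt (fun t => eval v (t, x.2)) (eval (derivFst v) x) x.1 := by
  obtain ⟨r, hxr, hrR⟩ := exists_between hx
  have hr : 0 ≤ r := (norm_nonneg x).trans hxr.le
  have hd : AbsSummableAt (derivFst v) r := hv.derivFst r hr hrR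
  have hx1 : |x.1| < r := (norm_fst_le x).trans_lt hxr
  have hx2 : |x.2| < r := (norm_snd_le x).trans_lt hxr
  let g' : ℕ × ℕ → ℝ → ℝ := fun q t => v q * (q.1 * t ^ (q.1 - 1)) * x.2 ^ q.2
  have hg'0 : ∀ t n, g' (0, n) t = 0 := fun t n => by simp [g']
  have hg'shift : ∀ t q, g' (q.1 + 1, q.2) t = term (derivFst v) (t, x.2) q := fun t q => by
    simp only [g', term, derivFst, Nat.add_sub_cancel]; push_cast; ring
  -- after the shift `(m + 1, n) ↦ (m, n)` this is the majorant series of `derivFst v` at `r`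
  let bound : ℕ × ℕ → ℝ := fun q => |v q| * (q.1 * r ^ (q.1 - 1)) * r ^ q.2
  have hbound : Summable bound := by
    refine (summable_shiftFst_iff fun n => by simp [bound]).1 (hd.congr fun q => ?_)
    simp only [bound, derivFst, Nat.add_sub_cancel, abs_mul]
    rw [abs_of_nonneg (by positivity)]; push_cast; ring
  have key := hasDerivAt_tsum_of_isPreconnected (g := fun q t => term v (t, x.2) q) (g' := g')
    hbound Metric.isOpen_ball (convex_ball (0 : ℝ) r).isPreconnected
    (fun q t _ => by
      simpa [term, g', mul_comm, mul_assoc, mul_left_comm] using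
        ((hasDerivAt_pow q.1 t).const_mul (v q)).mul_const (x.2 ^ q.2))
    (fun q t ht => by
      rw [mem_ball_zero_iff, Real.norm_eq_abs] at ht
      simp only [g', bound, Real.norm_eq_abs, abs_mul, abs_pow, Nat.abs_cast]
      gcongr)
    (mem_ball_zero_iff.2 hx1) (hv.summable_term hx) (mem_ball_zero_iff.2 hx1)
  rwa [← tsum_shiftFst (hg'0 x.1), funext (hg'shift x.1)] at key

lemma hasDerivAt_eval_snd (hv : ConvergesBelow v R) (hx : ‖x‖ < R) :
    HasDerivAt (fun t => eval v (x.1, t)) (eval (derivSnd v) x) x.2 := by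
  have h := hasDerivAt_eval_fst hv.swap (x := x.swap) (by simpa [Prod.norm_def, max_comm] using hx)
  simp only [Prod.fst_swap, Prod.snd_swap] at h
  rw [derivSnd_eq_swap]
  convert h using 1
  · exact funext fun t => (eval_swap v (x.1, t)).symm
  · simpa using eval_swap (derivFst (swap v)) x.swap

lemma eval_pde {u a b c : ℕ × ℕ → ℝ} (hu : ConvergesBelow u R) (ha : ConvergesBelow a R)
    (hb : ConvergesBelow b R) (hc : ConvergesBelow c R)
    (hcoeff : derivSnd (derivFst u) + mul a (derivFst u) + mul b (derivSnd u) + mul c u = 0)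
    (hx : ‖x‖ < R) :
    eval (derivSnd (derivFst u)) x + eval a x * eval (derivFst u) x
      + eval b x * eval (derivSnd u) x + eval c x * eval u x = 0 := by
  have h := ((((hu.derivFst.derivSnd.summable_term hx).hasSum.add
    (hasSum_term_mul ha hu.derivFst hx)).add (hasSum_term_mul hb hu.derivSnd hx)).add
    (hasSum_term_mul hc hu hx))
  have hzero : ∀ q, term (derivSnd (derivFst u)) x q + term (mul a (derivFst u)) x q
      + term (mul b (derivSnd u)) x q + term (mul c u) x q = 0 := fun q => by
    simp only [term, ← add_mul]
    rw [show _ + _ + _ + _ = (0 : ℝ) from congrFun hcoeff q]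
    ring
  simp only [hzero] at h
  exact h.unique hasSum_zero

variable {p p₀ : ℝ × ℝ}

lemma pdx_eval_sub (hv : ConvergesBelow v R) (hp : p ∈ Metric.ball p₀ R) :
    pdx (fun p => eval v (p - p₀)) p = eval (derivFst v) (p - p₀) :=
  (HasDerivAt.comp_sub_const p.1 p₀.1
    (hasDerivAt_eval_fst hv (x := p - p₀) (by rwa [← dist_eq_norm]))).deriv

lemma pdy_eval_sub (hv : ConvergesBelow v R) (hp : p ∈ Metric.ball p₀ R) :
    pdy (fun p => eval v (p - p₀)) p = eval (derivSnd v) (p - p₀) :=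
  (HasDerivAt.comp_sub_const p.2 p₀.2
    (hasDerivAt_eval_snd hv (x := p - p₀) (by rwa [← dist_eq_norm]))).deriv

lemma pdxy_eval_sub (hv : ConvergesBelow v R) (hp : p ∈ Metric.ball p₀ R) :
    pdxy (fun p => eval v (p - p₀)) p = eval (derivSnd (derivFst v)) (p - p₀) := by
  have h : (fun q => pdx (fun p => eval v (p - p₀)) q) =ᶠ[𝓝 p]
      fun q => eval (derivFst v) (q - p₀) :=
    eventually_of_mem (Metric.isOpen_ball.mem_nhds hp) fun q hq => pdx_eval_sub hv hq
  have h' : (fun y => pdx (fun p => eval v (p - p₀)) (p.1, y)) =ᶠ[𝓝 p.2]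
      fun y => eval (derivFst v) ((p.1, y) - p₀) :=
    h.comp_tendsto ((continuous_const.prodMk continuous_id).tendsto' p.2 p rfl)
  rw [pdxy, pdy, h'.deriv_eq]
  exact pdy_eval_sub hv.derivFst hp

def monomial (k m : ℕ) : ContinuousMultilinearMap ℝ (fun _ : Fin k => ℝ × ℝ) ℝ :=
  (ContinuousMultilinearMap.mkPiAlgebra ℝ (Fin k) ℝ).compContinuousLinearMap fun i =>
    if (i : ℕ) < m then ContinuousLinearMap.fst ℝ ℝ ℝ else ContinuousLinearMap.snd ℝ ℝ ℝ

lemma monomial_apply_const {k m : ℕ} (hm : m ≤ k) (x : ℝ × ℝ) :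
    monomial k m (fun _ => x) = x.1 ^ m * x.2 ^ (k - m) := by
  simp only [monomial, ContinuousMultilinearMap.compContinuousLinearMap_apply,
    ContinuousMultilinearMap.mkPiAlgebra_apply, apply_ite (fun L : ℝ × ℝ →L[ℝ] ℝ => L x),
    ContinuousLinearMap.coe_fst', ContinuousLinearMap.coe_snd']
  rw [Fin.prod_univ_eq_prod_range (fun i => if i < m then x.1 else x.2),
    ← prod_range_mul_prod_Ico _ hm, prod_congr rfl fun i hi => if_pos (mem_range.1 hi),
    prod_congr rfl fun i hi => if_neg (mem_Ico.1 hi).1.not_gt]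
  simp

lemma norm_monomial_le (k m : ℕ) : ‖monomial k m‖ ≤ 1 := by
  refine (ContinuousMultilinearMap.norm_compContinuousLinearMap_le _ _).trans ?_
  rw [ContinuousMultilinearMap.norm_mkPiAlgebra, one_mul]
  refine prod_le_one (fun _ _ => norm_nonneg _) fun i _ => ?_
  split_ifs
  exacts [ContinuousLinearMap.norm_fst_le ℝ ℝ ℝ, ContinuousLinearMap.norm_snd_le ℝ ℝ ℝ]

def series (v : ℕ × ℕ → ℝ) : FormalMultilinearSeries ℝ (ℝ × ℝ) ℝ :=
  fun k => ∑ q ∈ antidiagonal k, v q • monomial k q.1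

lemma series_apply_const (v : ℕ × ℕ → ℝ) (k : ℕ) (x : ℝ × ℝ) :
    series v k (fun _ => x) = ∑ q ∈ antidiagonal k, term v x q := by
  simp only [series, _root_.sum_apply, _root_.smul_apply]
  refine sum_congr rfl fun q hq => ?_
  rw [HasAntidiagonal.mem_antidiagonal] at hq
  rw [monomial_apply_const (by omega), ← hq, Nat.add_sub_cancel_left, smul_eq_mul, term]
  ring

lemma norm_series_le (v : ℕ × ℕ → ℝ) (k : ℕ) : ‖series v k‖ ≤ ∑ q ∈ antidiagonal k, |v q| :=
  (norm_sum_le _ _).trans <| sum_le_sum fun q _ => by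
    rw [norm_smul, Real.norm_eq_abs]
    exact mul_le_of_le_one_right (abs_nonneg _) (norm_monomial_le k q.1)

lemma AbsSummableAt.hasFPowerSeriesOnBall (hv : AbsSummableAt v r) (hr : 0 < r) :
    HasFPowerSeriesOnBall (eval v) (series v) 0 (ENNReal.ofReal r) where
  r_le := by
    rw [ENNReal.ofReal]
    refine (series v).le_radius_of_summable_norm ?_
    refine (hasSum_sum_antidiagonal hv.hasSum).summable.of_nonneg_of_le
      (fun _ => by positivity) fun k => ?_
    rw [Real.coe_toNNReal _ hr.le]
    refine (mul_le_mul_of_nonneg_right (norm_series_le v k) (by positivity)).trans_eq ?_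
    rw [sum_mul]
    refine sum_congr rfl fun q hq => ?_
    rw [HasAntidiagonal.mem_antidiagonal] at hq
    rw [← hq, pow_add, mul_assoc]
  r_pos := ENNReal.ofReal_pos.2 hr
  hasSum hy := by
    rw [Metric.eball_ofReal, mem_ball_zero_iff] at hy
    simp only [series_apply_const, zero_add]
    exact hasSum_sum_antidiagonal (hv.summable_abs_term hy.le).of_abs.hasSum

lemma analyticAt_eval_sub (hv : ConvergesBelow v R) (hp : p ∈ Metric.ball p₀ R) :
    AnalyticAt ℝ (fun p => eval v (p - p₀)) p := by
  obtain ⟨r, hpr, hrR⟩ := exists_between (Metric.mem_ball.1 hp)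
  have hr : 0 < r := dist_nonneg.trans_lt hpr
  refine ((hv r hr.le hrR).hasFPowerSeriesOnBall hr |>.comp_sub p₀).analyticAt_of_mem ?_
  rwa [zero_add, Metric.eball_ofReal, Metric.mem_ball]

lemma eval_zero (v : ℕ × ℕ → ℝ) : eval v 0 = v 0 := by
  rw [eval, tsum_eq_single 0 fun q hq => ?_]
  · simp [term]
  · rcases q with ⟨_ | m, _ | n⟩
    · exact absurd rfl hq
    all_goals simp [term]

lemma eval_congr_of_snd_eq_zero (h : ∀ m, v (m, 0) = w (m, 0)) (hx : x.2 = 0) :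
    eval v x = eval w x :=
  tsum_congr fun q => by rcases q with ⟨m, _ | n⟩ <;> simp [term, h, hx]

lemma eval_congr_of_fst_eq_zero (h : ∀ n, v (0, n) = w (0, n)) (hx : x.1 = 0) :
    eval v x = eval w x :=
  tsum_congr fun q => by rcases q with ⟨_ | m, n⟩ <;> simp [term, h, hx]

structure HasDoubleSeriesOn (f : ℝ × ℝ → ℝ) (v : ℕ × ℕ → ℝ) (p₀ : ℝ × ℝ) (R : ℝ) : Prop where
  convergesBelow : ConvergesBelow v R
  eval_eq : ∀ p ∈ Metric.ball p₀ R, eval v (p - p₀) = f p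

lemma HasDoubleSeriesOn.mono {f : ℝ × ℝ → ℝ} (h : HasDoubleSeriesOn f v p₀ R) (hr : r ≤ R) :
    HasDoubleSeriesOn f v p₀ r :=
  ⟨h.convergesBelow.mono hr, fun p hp => h.eval_eq p (Metric.ball_subset_ball hr hp)⟩

lemma HasDoubleSeriesOn.apply_zero {f : ℝ × ℝ → ℝ} (h : HasDoubleSeriesOn f v p₀ R) (hR : 0 < R) :
    v 0 = f p₀ := by
  rw [← h.eval_eq p₀ (Metric.mem_ball_self hR), sub_self, eval_zero]

lemma pde_eval_sub {a b c : ℝ × ℝ → ℝ} {va vb vc u : ℕ × ℕ → ℝ} (ha : HasDoubleSeriesOn a va p₀ R) (hb : HasDoubleSeriesOn b vb p₀ R)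
    (hc : HasDoubleSeriesOn c vc p₀ R) (hu : ConvergesBelow u R)
    (hcoeff : derivSnd (derivFst u) + mul va (derivFst u) + mul vb (derivSnd u) + mul vc u = 0)
    (hp : p ∈ Metric.ball p₀ R) :
    pdxy (fun p => eval u (p - p₀)) p + a p * pdx (fun p => eval u (p - p₀)) p
      + b p * pdy (fun p => eval u (p - p₀)) p + c p * eval u (p - p₀) = 0 := by
  rw [pdxy_eval_sub hu hp, pdx_eval_sub hu hp, pdy_eval_sub hu hp, ← ha.eval_eq p hp,
    ← hb.eval_eq p hp, ← hc.eval_eq p hp]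
  exact eval_pde hu ha.convergesBelow hb.convergesBelow hc.convergesBelow hcoeff
    (by rwa [← dist_eq_norm])

section Coefficients

variable {k : ℕ} (L : ContinuousMultilinearMap ℝ (fun _ : Fin k => ℝ × ℝ) ℝ)

/-- Expanding `L (x, …, x)` multilinearly in `x = x.1 • (1, 0) + x.2 • (0, 1)`, the coefficient
of `x.1 ^ m * x.2 ^ (k - m)` collects `L` over all placements of `m` copies of `(1, 0)`. -/
def homogCoeff (m : ℕ) : ℝ :=
  ∑ s ∈ powersetCard m (univ : Finset (Fin k)), L (s.piecewise (fun _ => (1, 0)) fun _ => (0, 1))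

lemma apply_const_eq_sum_homogCoeff (x : ℝ × ℝ) :
    L (fun _ => x) = ∑ m ∈ range (k + 1), homogCoeff L m * x.1 ^ m * x.2 ^ (k - m) := by
  have hx : (fun _ : Fin k => x) = (fun _ => (x.1, 0)) + fun _ => (0, x.2) := by
    ext <;> simp
  have hpw : ∀ s : Finset (Fin k),
      s.piecewise (fun _ => (x.1, (0 : ℝ))) (fun _ => ((0 : ℝ), x.2)) =
        fun i => s.piecewise (fun _ => x.1) (fun _ => x.2) i •
          s.piecewise (fun _ => ((1 : ℝ), (0 : ℝ))) (fun _ => (0, 1)) i := by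
    intro s; ext i <;> by_cases hi : i ∈ s <;> simp [hi]
  rw [hx, L.map_add_univ, ← powerset_univ, sum_powerset]
  simp only [hpw, L.map_smul_univ, prod_piecewise_const, Fintype.card_fin, homogCoeff, sum_mul,
    card_univ]
  refine sum_congr rfl fun m _ => sum_congr rfl fun s hs => ?_
  rw [(mem_powersetCard.1 hs).2, smul_eq_mul]
  ring

lemma abs_homogCoeff_le (m : ℕ) : |homogCoeff L m| ≤ k.choose m * ‖L‖ := by
  refine (abs_sum_le_sum_abs _ _).trans <|
    (sum_le_card_nsmul _ _ ‖L‖ fun s _ => ?_).trans_eq (by simp)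
  refine (L.le_opNorm _).trans_eq ?_
  rw [prod_eq_one fun i _ => by by_cases hi : i ∈ s <;> simp [hi, Prod.norm_def], mul_one]

variable (P : FormalMultilinearSeries ℝ (ℝ × ℝ) ℝ)

def doubleCoeff (q : ℕ × ℕ) : ℝ := homogCoeff (P (q.1 + q.2)) q.1

lemma sum_antidiagonal_doubleCoeff (F : ℝ → ℕ × ℕ → ℝ) (k : ℕ) :
    ∑ q ∈ antidiagonal k, F (doubleCoeff P q) q =
      ∑ m ∈ range (k + 1), F (homogCoeff (P k) m) (m, k - m) := by
  rw [Nat.sum_antidiagonal_eq_sum_range_succ_mk]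
  refine sum_congr rfl fun m hm => ?_
  rw [doubleCoeff, Nat.add_sub_cancel' (Nat.lt_succ_iff.1 (mem_range.1 hm))]

lemma apply_const_eq_sum_term (k : ℕ) (x : ℝ × ℝ) :
    P k (fun _ => x) = ∑ q ∈ antidiagonal k, term (doubleCoeff P) x q := by
  rw [apply_const_eq_sum_homogCoeff]
  exact (sum_antidiagonal_doubleCoeff P (fun c q => c * x.1 ^ q.1 * x.2 ^ q.2) k).symm

lemma sum_abs_doubleCoeff_le (k : ℕ) :
    ∑ q ∈ antidiagonal k, |doubleCoeff P q| ≤ 2 ^ k * ‖P k‖ := by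
  rw [sum_antidiagonal_doubleCoeff P (fun c _ => |c|) k]
  calc ∑ m ∈ range (k + 1), |homogCoeff (P k) m|
      ≤ ∑ m ∈ range (k + 1), (k.choose m : ℝ) * ‖P k‖ :=
        sum_le_sum fun m _ => abs_homogCoeff_le (P k) m
    _ = 2 ^ k * ‖P k‖ := by rw [← sum_mul, ← Nat.cast_sum, Nat.sum_range_choose]; push_cast; rfl

lemma convergesBelow_doubleCoeff {ρ : ℝ} (hρ : ENNReal.ofReal (2 * ρ) ≤ P.radius) :
    ConvergesBelow (doubleCoeff P) ρ := fun s hs hsρ => by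
  have hsum : Summable fun k => ‖P k‖ * (2 * s) ^ k := by
    have h := P.summable_norm_mul_pow (r := (2 * s).toNNReal) <| by
      rw [← ENNReal.ofReal]
      exact ((ENNReal.ofReal_lt_ofReal_iff (by linarith)).2 (by linarith)).trans_le hρ
    simpa [Real.coe_toNNReal _ (by positivity : 0 ≤ 2 * s)] using h
  refine summable_of_summable_sum_antidiagonal (fun _ => by positivity)
    (hsum.of_nonneg_of_le (fun _ => by positivity) fun k => ?_)
  calc ∑ q ∈ antidiagonal k, |doubleCoeff P q| * s ^ q.1 * s ^ q.2
      = (∑ q ∈ antidiagonal k, |doubleCoeff P q|) * s ^ k := by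
        rw [sum_mul]
        refine sum_congr rfl fun q hq => ?_
        rw [← (HasAntidiagonal.mem_antidiagonal.1 hq), pow_add, mul_assoc]
    _ ≤ 2 ^ k * ‖P k‖ * s ^ k := by gcongr; exact sum_abs_doubleCoeff_le P k
    _ = ‖P k‖ * (2 * s) ^ k := by ring

end Coefficients

lemma _root_.HasFPowerSeriesOnBall.hasDoubleSeriesOn {f : ℝ × ℝ → ℝ}
    {P : FormalMultilinearSeries ℝ (ℝ × ℝ) ℝ} {r : ENNReal} {ρ : ℝ}
    (hf : HasFPowerSeriesOnBall f P p₀ r) (hρ : ENNReal.ofReal (2 * ρ) ≤ r) :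
    HasDoubleSeriesOn f (doubleCoeff P) p₀ ρ := by
  have hv := convergesBelow_doubleCoeff P (hρ.trans hf.r_le)
  refine ⟨hv, fun p hp => ?_⟩
  have hp' : ‖p - p₀‖ < ρ := by rwa [← dist_eq_norm]
  have hmem : p - p₀ ∈ Metric.eball (0 : ℝ × ℝ) r := by
    rw [Metric.mem_eball, edist_dist, dist_zero_right]
    exact ((ENNReal.ofReal_lt_ofReal_iff (by linarith [norm_nonneg (p - p₀)])).2
      (by linarith [norm_nonneg (p - p₀)])).trans_le hρ
  have h := hf.hasSum hmem
  simp only [apply_const_eq_sum_term, add_sub_cancel] at h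
  exact (hasSum_sum_antidiagonal (hv.summable_term hp').hasSum).unique h

lemma _root_.AnalyticAt.exists_hasDoubleSeriesOn {f : ℝ × ℝ → ℝ} (hf : AnalyticAt ℝ f p₀) :
    ∃ v, ∀ᶠ R in 𝓝[>] 0, HasDoubleSeriesOn f v p₀ R := by
  obtain ⟨P, r, hP⟩ := hf
  obtain ⟨t, -, ht0, htr⟩ := ENNReal.lt_iff_exists_real_btwn.1 hP.r_pos
  have ht : 0 < t / 2 := by have := ENNReal.ofReal_pos.1 ht0; positivity
  refine ⟨doubleCoeff P, mem_of_superset (Ioc_mem_nhdsGT ht) fun R hR =>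
    (hP.hasDoubleSeriesOn ?_).mono hR.2⟩
  rw [mul_div_cancel₀ _ two_ne_zero]
  exact htr.le

end DoubleSeries

end

open DoubleSeries

noncomputable def goursatCoeff (a b c f g : ℕ × ℕ → ℝ) : ℕ × ℕ → ℝ
  | (m, 0) => f (m, 0)
  | (0, n + 1) => g (0, n + 1)
  | (m + 1, n + 1) =>
    -(((m + 1) * (n + 1) : ℝ))⁻¹ *
      ((∑ q ∈ range (m + 1) ×ˢ range (n + 1),
          a q * (((m - q.1 : ℕ) + 1 : ℝ) * goursatCoeff a b c f g (m - q.1 + 1, n - q.2))) +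
        (∑ q ∈ range (m + 1) ×ˢ range (n + 1),
          b q * (((n - q.2 : ℕ) + 1 : ℝ) * goursatCoeff a b c f g (m - q.1, n - q.2 + 1))) +
        ∑ q ∈ range (m + 1) ×ˢ range (n + 1), c q * goursatCoeff a b c f g (m - q.1, n - q.2))
  termination_by q => q.1 + q.2
  decreasing_by all_goals omega

section Goursat

variable {a b c f g : ℕ × ℕ → ℝ} {ρ K M : ℝ}

lemma goursatCoeff_mk_zero (m : ℕ) : goursatCoeff a b c f g (m, 0) = f (m, 0) := by
  rw [goursatCoeff]

lemma goursatCoeff_zero_mk (hfg : f 0 = g 0) (n : ℕ) :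
    goursatCoeff a b c f g (0, n) = g (0, n) := by
  rcases n with _ | n
  · exact (goursatCoeff_mk_zero 0).trans hfg
  · rw [goursatCoeff]

theorem goursatCoeff_pde :
    derivSnd (derivFst (goursatCoeff a b c f g)) + mul a (derivFst (goursatCoeff a b c f g))
      + mul b (derivSnd (goursatCoeff a b c f g)) + mul c (goursatCoeff a b c f g) = 0 := by
  ext ⟨m, n⟩
  simp only [Pi.add_apply, Pi.zero_apply, mul_apply_eq_sum_range, derivFst, derivSnd]
  rw [goursatCoeff]
  field_simp
  ring

lemma abs_goursatCoeff_succ_succ_le (ha : AbsSummableAt a ρ) (hb : AbsSummableAt b ρ)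
    (hc : AbsSummableAt c ρ) (hK : 1 ≤ K) (hKρ : 1 ≤ K * ρ)
    (hKabc : normAt a ρ + normAt b ρ + normAt c ρ ≤ K) (hM : 0 ≤ M) {m n : ℕ}
    (ih : ∀ i j, i + j ≤ m + n + 1 → |goursatCoeff a b c f g (i, j)| ≤ M * K ^ (i + j)) :
    |goursatCoeff a b c f g (m + 1, n + 1)| ≤ M * K ^ (m + 1 + (n + 1)) := by
  have hρ : 0 ≤ ρ := (pos_of_mul_pos_right (by linarith : 0 < K * ρ) (by linarith)).le
  have hP : 0 ≤ M * K ^ (m + n + 1) := by positivity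
  have hterm : ∀ (l d i j : ℕ) (q : ℕ × ℕ), d ≤ l → i + j + (q.1 + q.2) ≤ m + n + 1 →
      |((d : ℝ) + 1) * goursatCoeff a b c f g (i, j)| ≤
        (l + 1) * (M * K ^ (m + n + 1)) * (ρ ^ q.1 * ρ ^ q.2) := fun l d i j q hd h => by
    rw [abs_mul, abs_of_nonneg (by positivity), mul_assoc]
    refine mul_le_mul (by exact_mod_cast Nat.succ_le_succ hd) ?_ (abs_nonneg _) (by positivity)
    calc |goursatCoeff a b c f g (i, j)| ≤ M * K ^ (i + j) := ih i j (by omega)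
      _ ≤ M * (K ^ (m + n + 1) * ρ ^ (q.1 + q.2)) :=
        mul_le_mul_of_nonneg_left (pow_le_pow_mul_pow hK hKρ h) hM
      _ = M * K ^ (m + n + 1) * (ρ ^ q.1 * ρ ^ q.2) := by ring
  have hA := normAt_nonneg (v := a) hρ
  have hB := normAt_nonneg (v := b) hρ
  have hC := normAt_nonneg (v := c) hρ
  have hm : (0 : ℝ) ≤ m := m.cast_nonneg
  have hn : (0 : ℝ) ≤ n := n.cast_nonneg
  rw [goursatCoeff, abs_mul, abs_neg, abs_inv, abs_of_pos (by positivity),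
    inv_mul_le_iff₀ (by positivity)]
  set P := M * K ^ (m + n + 1)
  calc |_ + _ + _| ≤ |_| + |_| + |_| := abs_add_three _ _ _
    _ ≤ (m + 1) * P * normAt a ρ + (n + 1) * P * normAt b ρ + 1 * P * normAt c ρ := by
        gcongr
        · exact ha.abs_sum_mul_le hρ (by positivity) _ fun q hq => by
            simp only [mem_product, mem_range] at hq
            exact hterm m _ _ _ q (by omega) (by omega)
        · exact hb.abs_sum_mul_le hρ (by positivity) _ fun q hq => by
            simp only [mem_product, mem_range] at hq
            exact hterm n _ _ _ q (by omega) (by omega)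
        · exact hc.abs_sum_mul_le hρ (by positivity) _ fun q hq => by
            simp only [mem_product, mem_range] at hq
            simpa using hterm 0 0 _ _ q le_rfl (by omega)
    _ ≤ (m + 1) * (n + 1) * P * (normAt a ρ + normAt b ρ + normAt c ρ) := by
        nlinarith [mul_nonneg hP hA, mul_nonneg hP hB, mul_nonneg hP hC,
          mul_nonneg hm (mul_nonneg hP hB), mul_nonneg hn (mul_nonneg hP hA),
          mul_nonneg (mul_nonneg hm hn) (mul_nonneg hP hC), mul_nonneg hm (mul_nonneg hP hC),
          mul_nonneg hn (mul_nonneg hP hC)]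
    _ ≤ (m + 1) * (n + 1) * P * K := by gcongr
    _ = (m + 1) * (n + 1) * (M * K ^ (m + 1 + (n + 1))) := by ring

theorem abs_goursatCoeff_le (ha : AbsSummableAt a ρ) (hb : AbsSummableAt b ρ)
    (hc : AbsSummableAt c ρ) (hK : 1 ≤ K) (hKρ : 1 ≤ K * ρ)
    (hKabc : normAt a ρ + normAt b ρ + normAt c ρ ≤ K) (hM : 0 ≤ M)
    (hf : ∀ m, |f (m, 0)| ≤ M * K ^ m) (hg : ∀ n, |g (0, n)| ≤ M * K ^ n) :
    ∀ q, |goursatCoeff a b c f g q| ≤ M * K ^ (q.1 + q.2)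
  | (m, 0) => by simpa [goursatCoeff_mk_zero] using hf m
  | (0, n + 1) => by simpa [goursatCoeff] using hg (n + 1)
  | (m + 1, n + 1) => abs_goursatCoeff_succ_succ_le ha hb hc hK hKρ hKabc hM
      fun i j (_ : i + j ≤ m + n + 1) => abs_goursatCoeff_le ha hb hc hK hKρ hKabc hM hf hg (i, j)
  termination_by q => q.1 + q.2

end Goursat

theorem exists_convergesBelow_goursatCoeff {a b c f g : ℕ × ℕ → ℝ} {ρ : ℝ} (hρ : 0 < ρ)
    (ha : ConvergesBelow a ρ) (hb : ConvergesBelow b ρ) (hc : ConvergesBelow c ρ)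
    (hf : ConvergesBelow f ρ) (hg : ConvergesBelow g ρ) :
    ∃ R, 0 < R ∧ R ≤ ρ ∧ ConvergesBelow (goursatCoeff a b c f g) R := by
  set σ := ρ / 2
  have hσ : 0 < σ := half_pos hρ
  have hσρ : σ < ρ := half_lt_self hρ
  set K := max (max 1 σ⁻¹) (normAt a σ + normAt b σ + normAt c σ)
  set M := max (normAt f σ) (normAt g σ)
  have hK : 1 ≤ K := (le_max_left _ _).trans (le_max_left _ _)
  have hKσ : 1 ≤ K * σ := by
    rw [← inv_mul_cancel₀ hσ.ne']
    exact mul_le_mul_of_nonneg_right ((le_max_right _ _).trans (le_max_left _ _)) hσ.le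
  have hf' := (hf σ hσ.le hσρ).abs_le hσ.le hKσ
  have hg' := (hg σ hσ.le hσρ).abs_le hσ.le hKσ
  refine ⟨K⁻¹, by positivity, ?_, convergesBelow_of_abs_le (by positivity) <|
    abs_goursatCoeff_le (M := M) (ha σ hσ.le hσρ) (hb σ hσ.le hσρ) (hc σ hσ.le hσρ) hK hKσ
      (le_max_right _ _) ((normAt_nonneg hσ.le).trans (le_max_left _ _))
      (fun m => (hf' (m, 0)).trans ?_) fun n => (hg' (0, n)).trans ?_⟩
  · rw [inv_le_comm₀ (by positivity) hρ]
    exact (inv_lt_inv₀ hρ hσ |>.2 hσρ).le.trans ((le_max_right _ _).trans (le_max_left _ _))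
  · simpa using mul_le_mul_of_nonneg_right (le_max_left _ _) (by positivity)
  · simpa using mul_le_mul_of_nonneg_right (le_max_right _ _) (by positivity)

/-- **Goursat (characteristic initial-value) problem for the analytic canonical
hyperbolic equation**: if `a`, `b`, `c` are real-analytic at `(x₀, y₀)`, `φ` is
real-analytic at `x₀`, `ψ` is real-analytic at `y₀`, and `φ x₀ = ψ y₀`, then on some
open neighbourhood `U` of `(x₀, y₀)` there is a real-analytic solution `z` of
`∂²z/∂x∂y + a ∂z/∂x + b ∂z/∂y + c z = 0` with `z(x, y₀) = φ x` and `z(x₀, y) = ψ y`. -/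
theorem goursat_analytic_existence
    (a b c : ℝ × ℝ → ℝ) (φ ψ : ℝ → ℝ) (x₀ y₀ : ℝ)
    (ha : AnalyticAt ℝ a (x₀, y₀)) (hb : AnalyticAt ℝ b (x₀, y₀))
    (hc : AnalyticAt ℝ c (x₀, y₀))
    (hφ : AnalyticAt ℝ φ x₀) (hψ : AnalyticAt ℝ ψ y₀)
    (hcompat : φ x₀ = ψ y₀) :
    ∃ U : Set (ℝ × ℝ), IsOpen U ∧ (x₀, y₀) ∈ U ∧
      ∃ z : ℝ × ℝ → ℝ,
        (∀ p ∈ U, AnalyticAt ℝ z p) ∧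
        (∀ p ∈ U, pdxy z p + a p * pdx z p + b p * pdy z p + c p * z p = 0) ∧
        (∀ x : ℝ, (x, y₀) ∈ U → z (x, y₀) = φ x) ∧
        (∀ y : ℝ, (x₀, y) ∈ U → z (x₀, y) = ψ y) := by
  obtain ⟨va, hva⟩ := ha.exists_hasDoubleSeriesOn
  obtain ⟨vb, hvb⟩ := hb.exists_hasDoubleSeriesOn
  obtain ⟨vc, hvc⟩ := hc.exists_hasDoubleSeriesOn
  obtain ⟨vφ, hvφ⟩ := (hφ.comp (x := (x₀, y₀)) analyticAt_fst).exists_hasDoubleSeriesOn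
  obtain ⟨vψ, hvψ⟩ := (hψ.comp (x := (x₀, y₀)) analyticAt_snd).exists_hasDoubleSeriesOn
  obtain ⟨ρ, hρ, hA, hB, hC, hΦ, hΨ⟩ :=
    (eventually_mem_nhdsWithin.and (hva.and (hvb.and (hvc.and (hvφ.and hvψ))))).exists
  have hcorner : vφ 0 = vψ 0 :=
    (hΦ.apply_zero hρ).trans (hcompat.trans (hΨ.apply_zero hρ).symm)
  obtain ⟨R, hR, hRρ, hu⟩ := exists_convergesBelow_goursatCoeff hρ hA.convergesBelow
    hB.convergesBelow hC.convergesBelow hΦ.convergesBelow hΨ.convergesBelow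
  refine ⟨Metric.ball (x₀, y₀) R, Metric.isOpen_ball, Metric.mem_ball_self hR,
    fun p => eval (goursatCoeff va vb vc vφ vψ) (p - (x₀, y₀)),
    fun p hp => analyticAt_eval_sub hu hp,
    fun p hp => pde_eval_sub (hA.mono hRρ) (hB.mono hRρ) (hC.mono hRρ) hu goursatCoeff_pde hp,
    fun x hx => ?_, fun y hy => ?_⟩
  · dsimp only
    rw [eval_congr_of_snd_eq_zero goursatCoeff_mk_zero (by simp)]
    exact (hΦ.mono hRρ).eval_eq _ hx
  · dsimp only
    rw [eval_congr_of_fst_eq_zero (goursatCoeff_zero_mk hcorner) (by simp)]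
    exact (hΨ.mono hRρ).eval_eq _ hy
end

section
/- Let x₀ < x₁ and y₀ < y₁ and let Q := [x₀, x₁] × [y₀, y₁]. Suppose z, u : ℝ² → ℝ are twice continuously differentiable on an open set containing Q, that L[z] = 0 and L*[u] = 0 on Q, and that u satisfies the Riemann-kernel characteristic conditions u(x, y₀) = exp(∫_{x₀}^{x} b(s, y₀) ds) for x ∈ [x₀, x₁] and u(x₀, y) = exp(∫_{y₀}^{y} a(x₀, s) ds) for y ∈ [y₀, y₁]. Then z(x₀, y₀) = u(x₁, y₁)·z(x₁, y₁) − ∫_{x₀}^{x₁} u(x, y₁)·(∂z/∂x(x, y₁) + b(x, y₁)·z(x, y₁)) dx − ∫_{y₀}^{y₁} u(x₁, y)·(∂z/∂y(x₁, y) + a(x₁, y)·z(x₁, y)) dy. -/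
/-!
Put `R = a u z - z u_y` and `P = u (z_x + b z)` (`greenFluxFst`, `greenFluxSnd`). Lagrange's
identity `R_x + P_y = u L[z] - z L*[u]` makes the field `(R, P)` divergence free on `Q`, so by the
divergence theorem its flux through `∂Q` vanishes. The kernel conditions are exactly what makes
the flux through the characteristics through `(x₀, y₀)` explicit: on `y = y₀` we have `u_x = b u`,
so `P = (u z)_x` there, and on `x = x₀` we have `u_y = a u`, so `R = 0` there. On `x = x₁`,
`u (z_y + a z) = R + (u z)_y`, and `u (x₀, y₀) = 1` leaves `z (x₀, y₀)` alone on one side.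
-/

open Set

/-- The canonical hyperbolic operator `L[z] = ∂²z/∂x∂y + a ∂z/∂x + b ∂z/∂y + c z`. -/
noncomputable def Lop (a b c z : ℝ × ℝ → ℝ) (p : ℝ × ℝ) : ℝ :=
  pdxy z p + a p * pdx z p + b p * pdy z p + c p * z p

/-- The adjoint operator `L*[u] = ∂²u/∂x∂y − ∂(au)/∂x − ∂(bu)/∂y + c u`. -/
noncomputable def LstarOp (a b c u : ℝ × ℝ → ℝ) (p : ℝ × ℝ) : ℝ :=
  pdxy u p - pdx (fun q => a q * u q) p - pdy (fun q => b q * u q) p + c p * u p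

open Filter Topology MeasureTheory

section PartialDerivatives

variable {f : ℝ × ℝ → ℝ} {p : ℝ × ℝ}

theorem pdx_eq_fderiv (hf : DifferentiableAt ℝ f p) : pdx f p = fderiv ℝ f p (1, 0) :=
  (hf.hasFDerivAt.comp_hasDerivAt p.1 ((hasDerivAt_id p.1).prodMk (hasDerivAt_const _ _))).deriv

theorem pdy_eq_fderiv (hf : DifferentiableAt ℝ f p) : pdy f p = fderiv ℝ f p (0, 1) :=
  (hf.hasFDerivAt.comp_hasDerivAt p.2 ((hasDerivAt_const _ _).prodMk (hasDerivAt_id p.2))).deriv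

theorem hasDerivAt_pdx (hf : DifferentiableAt ℝ f p) :
    HasDerivAt (fun x => f (x, p.2)) (pdx f p) p.1 :=
  (hf.comp p.1 (differentiableAt_id.prodMk (differentiableAt_const _))).hasDerivAt

theorem hasDerivAt_pdy (hf : DifferentiableAt ℝ f p) :
    HasDerivAt (fun y => f (p.1, y)) (pdy f p) p.2 :=
  (hf.comp p.2 ((differentiableAt_const _).prodMk differentiableAt_id)).hasDerivAt

theorem pdx_eventuallyEq_fderiv (hf : ContDiffAt ℝ 1 f p) :
    pdx f =ᶠ[𝓝 p] fun q => fderiv ℝ f q (1, 0) :=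
  (hf.eventually (by simp)).mono fun _ hq => pdx_eq_fderiv (hq.differentiableAt one_ne_zero)

theorem pdy_eventuallyEq_fderiv (hf : ContDiffAt ℝ 1 f p) :
    pdy f =ᶠ[𝓝 p] fun q => fderiv ℝ f q (0, 1) :=
  (hf.eventually (by simp)).mono fun _ hq => pdy_eq_fderiv (hq.differentiableAt one_ne_zero)

theorem contDiffAt_pdx {n : ℕ} (hf : ContDiffAt ℝ (n + 1) f p) : ContDiffAt ℝ n (pdx f) p :=
  ((hf.fderiv_right le_rfl).clm_apply contDiffAt_const).congr_of_eventuallyEq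
    (pdx_eventuallyEq_fderiv (hf.of_le (by simp)))

theorem contDiffAt_pdy {n : ℕ} (hf : ContDiffAt ℝ (n + 1) f p) : ContDiffAt ℝ n (pdy f) p :=
  ((hf.fderiv_right le_rfl).clm_apply contDiffAt_const).congr_of_eventuallyEq
    (pdy_eventuallyEq_fderiv (hf.of_le (by simp)))

theorem differentiableAt_pdx (hf : ContDiffAt ℝ 2 f p) :
    DifferentiableAt ℝ (pdx f) p :=
  (contDiffAt_pdx (n := 1) hf).differentiableAt one_ne_zero

theorem differentiableAt_pdy (hf : ContDiffAt ℝ 2 f p) :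
    DifferentiableAt ℝ (pdy f) p :=
  (contDiffAt_pdy (n := 1) hf).differentiableAt one_ne_zero

theorem pdx_pdy_eq_fderiv_fderiv (hf : ContDiffAt ℝ 2 f p) :
    pdx (pdy f) p = fderiv ℝ (fderiv ℝ f) p (1, 0) (0, 1) := by
  have hD : DifferentiableAt ℝ (fderiv ℝ f) p :=
    (hf.fderiv_right (m := 1) le_rfl).differentiableAt one_ne_zero
  rw [pdx_eq_fderiv (differentiableAt_pdy hf),
    (pdy_eventuallyEq_fderiv (hf.of_le (by simp))).fderiv_eq,
    fderiv_clm_apply hD (differentiableAt_const _)]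
  simp

theorem pdy_pdx_eq_fderiv_fderiv (hf : ContDiffAt ℝ 2 f p) :
    pdy (pdx f) p = fderiv ℝ (fderiv ℝ f) p (0, 1) (1, 0) := by
  have hD : DifferentiableAt ℝ (fderiv ℝ f) p :=
    (hf.fderiv_right (m := 1) le_rfl).differentiableAt one_ne_zero
  rw [pdy_eq_fderiv (differentiableAt_pdx hf),
    (pdx_eventuallyEq_fderiv (hf.of_le (by simp))).fderiv_eq,
    fderiv_clm_apply hD (differentiableAt_const _)]
  simp

theorem pdx_pdy_eq_pdxy (hf : ContDiffAt ℝ 2 f p) : pdx (pdy f) p = pdxy f p := by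
  rw [pdxy, pdx_pdy_eq_fderiv_fderiv hf, pdy_pdx_eq_fderiv_fderiv hf,
    hf.isSymmSndFDerivAt (by simp)]

end PartialDerivatives

theorem boundary_flux_eq_zero_of_pdx_add_pdy_eq_zero {f g : ℝ × ℝ → ℝ} {x₀ x₁ y₀ y₁ : ℝ}
    (hx : x₀ ≤ x₁) (hy : y₀ ≤ y₁)
    (hf : ∀ p ∈ Icc x₀ x₁ ×ˢ Icc y₀ y₁, DifferentiableAt ℝ f p)
    (hg : ∀ p ∈ Icc x₀ x₁ ×ˢ Icc y₀ y₁, DifferentiableAt ℝ g p)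
    (hdiv : ∀ p ∈ Icc x₀ x₁ ×ˢ Icc y₀ y₁, pdx f p + pdy g p = 0) :
    (((∫ x in x₀..x₁, g (x, y₁)) - ∫ x in x₀..x₁, g (x, y₀)) + ∫ y in y₀..y₁, f (x₁, y)) -
      ∫ y in y₀..y₁, f (x₀, y) = 0 := by
  have hdiv' : EqOn (fun p => fderiv ℝ f p (1, 0) + fderiv ℝ g p (0, 1)) 0
      (Icc x₀ x₁ ×ˢ Icc y₀ y₁) := fun p hp => by
    simpa [pdx_eq_fderiv (hf p hp), pdy_eq_fderiv (hg p hp)] using hdiv p hp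
  have hinterior : Ioo x₀ x₁ ×ˢ Ioo y₀ y₁ ⊆ Icc x₀ x₁ ×ˢ Icc y₀ y₁ :=
    prod_mono Ioo_subset_Icc_self Ioo_subset_Icc_self
  rw [Icc_prod_Icc] at hf hg hdiv' hinterior
  rw [← integral_divergence_prod_Icc_of_hasFDerivAt_of_le f g (fderiv ℝ f) (fderiv ℝ g)
      (x₀, y₀) (x₁, y₁) ⟨hx, hy⟩ (fun p hp => (hf p hp).continuousAt.continuousWithinAt)
      (fun p hp => (hg p hp).continuousAt.continuousWithinAt)
      (fun p hp => (hf p (hinterior hp)).hasFDerivAt)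
      (fun p hp => (hg p (hinterior hp)).hasFDerivAt)
      (integrableOn_zero.congr_fun hdiv'.symm measurableSet_Icc),
    setIntegral_congr_fun measurableSet_Icc hdiv']
  simp

theorem HasDerivAt.eq_mul_of_eqOn_exp_integral {g h : ℝ → ℝ} {g' t₀ t₁ t : ℝ}
    (hg' : HasDerivAt g g' t) (ht : t₀ < t₁) (hh : Continuous h)
    (hg : EqOn g (fun s => Real.exp (∫ r in t₀..s, h r)) (Icc t₀ t₁)) (htI : t ∈ Icc t₀ t₁) :
    g' = h t * g t := by
  have hexp : HasDerivWithinAt g (Real.exp (∫ r in t₀..t, h r) * h t) (Icc t₀ t₁) t :=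
    (hh.integral_hasStrictDerivAt t₀ t).hasDerivAt.exp.hasDerivWithinAt.congr hg (hg htI)
  rw [(uniqueDiffOn_Icc ht t htI).eq_deriv _ hg'.hasDerivWithinAt hexp, hg htI, mul_comm]

theorem intervalIntegrable_comp_prodMk_left {g : ℝ × ℝ → ℝ} {x₀ x₁ y : ℝ} (hx : x₀ ≤ x₁)
    (hg : ∀ x ∈ Icc x₀ x₁, ContinuousAt g (x, y)) :
    IntervalIntegrable (fun x => g (x, y)) volume x₀ x₁ :=
  ContinuousOn.intervalIntegrable fun x hx' =>
    (ContinuousAt.comp' (f := fun x => (x, y)) (hg x (uIcc_of_le hx ▸ hx'))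
      (Continuous.prodMk_left y).continuousAt).continuousWithinAt

theorem intervalIntegrable_comp_prodMk_right {g : ℝ × ℝ → ℝ} {x y₀ y₁ : ℝ} (hy : y₀ ≤ y₁)
    (hg : ∀ y ∈ Icc y₀ y₁, ContinuousAt g (x, y)) :
    IntervalIntegrable (fun y => g (x, y)) volume y₀ y₁ :=
  ContinuousOn.intervalIntegrable fun y hy' =>
    (ContinuousAt.comp' (f := fun y => (x, y)) (hg y (uIcc_of_le hy ▸ hy'))
      (Continuous.prodMk_right x).continuousAt).continuousWithinAt

section GreenFlux

variable {a b c z u : ℝ × ℝ → ℝ} {p : ℝ × ℝ} {x₀ x₁ y₀ y₁ : ℝ}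

noncomputable def greenFluxFst (a z u : ℝ × ℝ → ℝ) (p : ℝ × ℝ) : ℝ :=
  a p * u p * z p - z p * pdy u p

noncomputable def greenFluxSnd (b z u : ℝ × ℝ → ℝ) (p : ℝ × ℝ) : ℝ :=
  u p * (pdx z p + b p * z p)

theorem pdx_greenFluxFst_add_pdy_greenFluxSnd (ha : DifferentiableAt ℝ a p)
    (hb : DifferentiableAt ℝ b p) (hz : ContDiffAt ℝ 2 z p) (hu : ContDiffAt ℝ 2 u p) :
    pdx (greenFluxFst a z u) p + pdy (greenFluxSnd b z u) p =
      u p * Lop a b c z p - z p * LstarOp a b c u p := by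
  have hz' := hz.differentiableAt two_ne_zero
  have hu' := hu.differentiableAt two_ne_zero
  have hFst : pdx (greenFluxFst a z u) p = (pdx a p * u p + a p * pdx u p) * z p
      + a p * u p * pdx z p - (pdx z p * pdy u p + z p * pdx (pdy u) p) :=
    ((((hasDerivAt_pdx ha).mul (hasDerivAt_pdx hu')).mul (hasDerivAt_pdx hz')).sub
      ((hasDerivAt_pdx hz').mul (hasDerivAt_pdx (differentiableAt_pdy hu)))).deriv
  have hSnd : pdy (greenFluxSnd b z u) p = pdy u p * (pdx z p + b p * z p)
      + u p * (pdy (pdx z) p + (pdy b p * z p + b p * pdy z p)) :=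
    ((hasDerivAt_pdy hu').mul ((hasDerivAt_pdy (differentiableAt_pdx hz)).add
      ((hasDerivAt_pdy hb).mul (hasDerivAt_pdy hz')))).deriv
  have hau : pdx (fun q => a q * u q) p = pdx a p * u p + a p * pdx u p :=
    ((hasDerivAt_pdx ha).mul (hasDerivAt_pdx hu')).deriv
  have hbu : pdy (fun q => b q * u q) p = pdy b p * u p + b p * pdy u p :=
    ((hasDerivAt_pdy hb).mul (hasDerivAt_pdy hu')).deriv
  rw [hFst, hSnd, Lop, LstarOp, hau, hbu, pdx_pdy_eq_pdxy hu]
  unfold pdxy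
  ring

theorem continuousAt_greenFluxFst (ha : ContinuousAt a p) (hz : ContinuousAt z p)
    (hu : ContDiffAt ℝ 2 u p) : ContinuousAt (greenFluxFst a z u) p :=
  ((ha.mul hu.continuousAt).mul hz).sub (hz.mul (differentiableAt_pdy hu).continuousAt)

theorem continuousAt_greenFluxSnd (hb : ContinuousAt b p) (hz : ContDiffAt ℝ 2 z p)
    (hu : ContinuousAt u p) : ContinuousAt (greenFluxSnd b z u) p :=
  hu.mul ((differentiableAt_pdx hz).continuousAt.add (hb.mul hz.continuousAt))

theorem differentiableAt_greenFluxFst (ha : DifferentiableAt ℝ a p)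
    (hz : DifferentiableAt ℝ z p) (hu : ContDiffAt ℝ 2 u p) :
    DifferentiableAt ℝ (greenFluxFst a z u) p :=
  ((ha.mul (hu.differentiableAt two_ne_zero)).mul hz).sub (hz.mul (differentiableAt_pdy hu))

theorem differentiableAt_greenFluxSnd (hb : DifferentiableAt ℝ b p)
    (hz : ContDiffAt ℝ 2 z p) (hu : DifferentiableAt ℝ u p) :
    DifferentiableAt ℝ (greenFluxSnd b z u) p :=
  hu.mul ((differentiableAt_pdx hz).add (hb.mul (hz.differentiableAt two_ne_zero)))

theorem greenFlux_boundary_eq_zero (ha : Differentiable ℝ a) (hb : Differentiable ℝ b)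
    (hx : x₀ ≤ x₁) (hy : y₀ ≤ y₁)
    (hz : ∀ p ∈ Icc x₀ x₁ ×ˢ Icc y₀ y₁, ContDiffAt ℝ 2 z p)
    (hu : ∀ p ∈ Icc x₀ x₁ ×ˢ Icc y₀ y₁, ContDiffAt ℝ 2 u p)
    (hLz : ∀ p ∈ Icc x₀ x₁ ×ˢ Icc y₀ y₁, Lop a b c z p = 0)
    (hLu : ∀ p ∈ Icc x₀ x₁ ×ˢ Icc y₀ y₁, LstarOp a b c u p = 0) :
    (((∫ x in x₀..x₁, greenFluxSnd b z u (x, y₁)) - ∫ x in x₀..x₁, greenFluxSnd b z u (x, y₀)) +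
        ∫ y in y₀..y₁, greenFluxFst a z u (x₁, y)) -
      ∫ y in y₀..y₁, greenFluxFst a z u (x₀, y) = 0 := by
  refine boundary_flux_eq_zero_of_pdx_add_pdy_eq_zero hx hy
    (fun p hp => differentiableAt_greenFluxFst (ha p) ((hz p hp).differentiableAt two_ne_zero)
      (hu p hp))
    (fun p hp => differentiableAt_greenFluxSnd (hb p) (hz p hp)
      ((hu p hp).differentiableAt two_ne_zero)) fun p hp => ?_
  rw [pdx_greenFluxFst_add_pdy_greenFluxSnd (ha p) (hb p) (hz p hp) (hu p hp), hLz p hp,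
    hLu p hp, mul_zero, mul_zero, sub_zero]

theorem integral_greenFluxSnd_eq_of_eq_exp_integral {y : ℝ} (hx : x₀ < x₁) (hb : Continuous b)
    (hz : ∀ x ∈ Icc x₀ x₁, ContDiffAt ℝ 2 z (x, y))
    (hu : ∀ x ∈ Icc x₀ x₁, ContDiffAt ℝ 2 u (x, y))
    (hub : ∀ x ∈ Icc x₀ x₁, u (x, y) = Real.exp (∫ s in x₀..x, b (s, y))) :
    ∫ x in x₀..x₁, greenFluxSnd b z u (x, y) = u (x₁, y) * z (x₁, y) - z (x₀, y) := by
  have hpole : u (x₀, y) = 1 := by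
    rw [hub x₀ (left_mem_Icc.2 hx.le), intervalIntegral.integral_same, Real.exp_zero]
  rw [← one_mul (z (x₀, y)), ← hpole]
  refine intervalIntegral.integral_eq_sub_of_hasDerivAt (f := fun x => u (x, y) * z (x, y))
    (fun x hx' => ?_) (intervalIntegrable_comp_prodMk_left hx.le fun x hx' =>
      continuousAt_greenFluxSnd hb.continuousAt (hz x hx') (hu x hx').continuousAt)
  rw [uIcc_of_le hx.le] at hx'
  have hux := hasDerivAt_pdx ((hu x hx').differentiableAt two_ne_zero)
  refine (hux.mul (hasDerivAt_pdx ((hz x hx').differentiableAt two_ne_zero))).congr_deriv ?_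
  rw [greenFluxSnd, hux.eq_mul_of_eqOn_exp_integral hx (by fun_prop) hub hx']
  ring

theorem integral_greenFluxFst_eq_zero_of_eq_exp_integral {x : ℝ} (hy : y₀ < y₁)
    (ha : Continuous a) (hu : ∀ y ∈ Icc y₀ y₁, DifferentiableAt ℝ u (x, y))
    (hua : ∀ y ∈ Icc y₀ y₁, u (x, y) = Real.exp (∫ s in y₀..y, a (x, s))) :
    ∫ y in y₀..y₁, greenFluxFst a z u (x, y) = 0 := by
  refine intervalIntegral.integral_congr (g := fun _ => 0) (fun y hy' => ?_) |>.trans (by simp)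
  rw [uIcc_of_le hy.le] at hy'
  rw [greenFluxFst,
    (hasDerivAt_pdy (hu y hy')).eq_mul_of_eqOn_exp_integral hy (by fun_prop) hua hy']
  ring

theorem integral_mul_pdy_add_eq {x : ℝ} (hy : y₀ ≤ y₁) (ha : Continuous a)
    (hz : ∀ y ∈ Icc y₀ y₁, ContDiffAt ℝ 2 z (x, y))
    (hu : ∀ y ∈ Icc y₀ y₁, ContDiffAt ℝ 2 u (x, y)) :
    ∫ y in y₀..y₁, u (x, y) * (pdy z (x, y) + a (x, y) * z (x, y)) =
      (∫ y in y₀..y₁, greenFluxFst a z u (x, y)) +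
        (u (x, y₁) * z (x, y₁) - u (x, y₀) * z (x, y₀)) := by
  have hFst : IntervalIntegrable (fun y => greenFluxFst a z u (x, y)) volume y₀ y₁ :=
    intervalIntegrable_comp_prodMk_right hy fun y hy' =>
      continuousAt_greenFluxFst ha.continuousAt (hz y hy').continuousAt (hu y hy')
  have hint : IntervalIntegrable (fun y => u (x, y) * (pdy z (x, y) + a (x, y) * z (x, y)))
      volume y₀ y₁ :=
    intervalIntegrable_comp_prodMk_right (g := fun p => u p * (pdy z p + a p * z p)) hy
      fun y hy' => (hu y hy').continuousAt.mul ((differentiableAt_pdy (hz y hy')).continuousAt.add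
        (ha.continuousAt.mul (hz y hy').continuousAt))
  rw [← intervalIntegral.integral_eq_sub_of_hasDerivAt (f := fun y => u (x, y) * z (x, y))
      (fun y hy' => ?_) (hint.sub hFst), ← intervalIntegral.integral_add hFst (hint.sub hFst)]
  · simp
  rw [uIcc_of_le hy] at hy'
  refine ((hasDerivAt_pdy ((hu y hy').differentiableAt two_ne_zero)).mul
    (hasDerivAt_pdy ((hz y hy').differentiableAt two_ne_zero))).congr_deriv ?_
  rw [greenFluxFst]
  ring

end GreenFlux

theorem riemann_representation_general
    (a b c : ℝ × ℝ → ℝ) (ha : ContDiff ℝ 1 a) (hb : ContDiff ℝ 1 b)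
    (x₀ x₁ y₀ y₁ : ℝ) (hx : x₀ < x₁) (hy : y₀ < y₁)
    (z u : ℝ × ℝ → ℝ)
    (O : Set (ℝ × ℝ)) (hO : IsOpen O) (hQO : Icc x₀ x₁ ×ˢ Icc y₀ y₁ ⊆ O)
    (hz : ContDiffOn ℝ 2 z O) (hu : ContDiffOn ℝ 2 u O)
    (hLz : ∀ p ∈ Icc x₀ x₁ ×ˢ Icc y₀ y₁, Lop a b c z p = 0)
    (hLu : ∀ p ∈ Icc x₀ x₁ ×ˢ Icc y₀ y₁, LstarOp a b c u p = 0)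
    (hub : ∀ x ∈ Icc x₀ x₁, u (x, y₀) = Real.exp (∫ s in x₀..x, b (s, y₀)))
    (hua : ∀ y ∈ Icc y₀ y₁, u (x₀, y) = Real.exp (∫ s in y₀..y, a (x₀, s))) :
    z (x₀, y₀) =
      u (x₁, y₁) * z (x₁, y₁)
        - (∫ x in x₀..x₁, u (x, y₁) * (pdx z (x, y₁) + b (x, y₁) * z (x, y₁)))
        - ∫ y in y₀..y₁, u (x₁, y) * (pdy z (x₁, y) + a (x₁, y) * z (x₁, y)) := by
  have hzQ : ∀ p ∈ Icc x₀ x₁ ×ˢ Icc y₀ y₁, ContDiffAt ℝ 2 z p :=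
    fun p hp => hz.contDiffAt (hO.mem_nhds (hQO hp))
  have huQ : ∀ p ∈ Icc x₀ x₁ ×ˢ Icc y₀ y₁, ContDiffAt ℝ 2 u p :=
    fun p hp => hu.contDiffAt (hO.mem_nhds (hQO hp))
  have hflux := greenFlux_boundary_eq_zero (ha.differentiable one_ne_zero)
    (hb.differentiable one_ne_zero) hx.le hy.le hzQ huQ hLz hLu
  have hbottom := integral_greenFluxSnd_eq_of_eq_exp_integral hx hb.continuous
    (fun x hx' => hzQ _ ⟨hx', left_mem_Icc.2 hy.le⟩)
    (fun x hx' => huQ _ ⟨hx', left_mem_Icc.2 hy.le⟩) hub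
  have hleft := integral_greenFluxFst_eq_zero_of_eq_exp_integral (z := z) hy ha.continuous
    (fun y hy' => (huQ _ ⟨left_mem_Icc.2 hx.le, hy'⟩).differentiableAt two_ne_zero) hua
  rw [integral_mul_pdy_add_eq hy.le ha.continuous
    (fun y hy' => hzQ _ ⟨right_mem_Icc.2 hx.le, hy'⟩)
    (fun y hy' => huQ _ ⟨right_mem_Icc.2 hx.le, hy'⟩)]
  unfold greenFluxSnd at hflux hbottom
  linarith

/-- **Riemann's representation formula with data on the characteristics through
`(x₀, y₀)`**: if `L[z] = 0`, `L*[u] = 0` on `Q = [x₀,x₁] × [y₀,y₁]` and `u` is the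
Riemann kernel with pole `(x₀, y₀)`, then the value `z (x₀, y₀)` is recovered from
the values of `z` on the two characteristics through `(x₁, y₁)`. -/
theorem riemann_representation
    (a b c : ℝ × ℝ → ℝ) (ha : ContDiff ℝ 1 a) (hb : ContDiff ℝ 1 b) (hc : Continuous c)
    (x₀ x₁ y₀ y₁ : ℝ) (hx : x₀ < x₁) (hy : y₀ < y₁)
    (z u : ℝ × ℝ → ℝ)
    (O : Set (ℝ × ℝ)) (hO : IsOpen O) (hQO : Icc x₀ x₁ ×ˢ Icc y₀ y₁ ⊆ O)
    (hz : ContDiffOn ℝ 2 z O) (hu : ContDiffOn ℝ 2 u O)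
    (hLz : ∀ p ∈ Icc x₀ x₁ ×ˢ Icc y₀ y₁, Lop a b c z p = 0)
    (hLu : ∀ p ∈ Icc x₀ x₁ ×ˢ Icc y₀ y₁, LstarOp a b c u p = 0)
    (hub : ∀ x ∈ Icc x₀ x₁, u (x, y₀) = Real.exp (∫ s in x₀..x, b (s, y₀)))
    (hua : ∀ y ∈ Icc y₀ y₁, u (x₀, y) = Real.exp (∫ s in y₀..y, a (x₀, s))) :
    z (x₀, y₀) =
      u (x₁, y₁) * z (x₁, y₁)
        - (∫ x in x₀..x₁, u (x, y₁) * (pdx z (x, y₁) + b (x, y₁) * z (x, y₁)))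
        - ∫ y in y₀..y₁, u (x₁, y) * (pdy z (x₁, y) + a (x₁, y) * z (x₁, y)) :=
  riemann_representation_general a b c ha hb x₀ x₁ y₀ y₁ hx hy z u O hO hQO hz hu hLz hLu hub hua
end

section
/- Let A ≥ 0 and t₀ > 0, and let y : [0, t₀] → ℝ be differentiable with y(t) ≥ 0 for all t and y′(t) ≤ 2A·√(y(t)) for all t ∈ [0, t₀]. Then for every t ∈ [0, t₀], y(t) ≤ (√(y(0)) + A·t)². -/
/-!
Where `y > 0` the hypothesis says `(√y)′ ≤ A`, but `√y` need not be differentiable where `y`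
vanishes. So instead compare `y` with the barriers `(c + m(t - a))²` for `c > √(y a)` and
`m > A`: at a first touching point `√y = c + m(t - a) > 0`, hence `y′ ≤ 2A√y` is strictly
smaller than the barrier's slope `2m(c + m(t - a))`, and the fencing theorem applies.
Letting `c ↓ √(y a)` and `m ↓ A` gives the estimate.
-/

open Set Filter Topology

theorem le_sq_of_deriv_le_two_mul_sqrt_of_lt {f f' : ℝ → ℝ} {a b A c m : ℝ}
    (hf : ContinuousOn f (Icc a b)) (hf' : ∀ x ∈ Ico a b, HasDerivWithinAt f (f' x) (Ici x) x)
    (hbound : ∀ x ∈ Ico a b, f' x ≤ 2 * A * √(f x))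
    (hc : 0 < c) (hm : 0 ≤ m) (hAm : A < m) (ha : f a ≤ c ^ 2) :
    ∀ x ∈ Icc a b, f x ≤ (c + m * (x - a)) ^ 2 := by
  have hB : ∀ x, HasDerivAt (fun s => (c + m * (s - a)) ^ 2) (2 * m * (c + m * (x - a))) x := by
    intro x
    have hlin : HasDerivAt (fun s => c + m * (s - a)) m x := by
      simpa using (((hasDerivAt_id' x).sub_const a).const_mul m).const_add c
    exact (hlin.pow 2).congr_deriv (by ring)
  refine image_le_of_deriv_right_lt_deriv_boundary hf hf' (by simpa using ha) hB ?_
  intro x hx hfx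
  have hpos : 0 < c + m * (x - a) := by nlinarith [hx.1]
  have hsqrt : √(f x) = c + m * (x - a) := by rw [hfx, Real.sqrt_sq hpos.le]
  calc f' x ≤ 2 * A * √(f x) := hbound x hx
    _ = 2 * A * (c + m * (x - a)) := by rw [hsqrt]
    _ < 2 * m * (c + m * (x - a)) := by nlinarith

theorem le_sq_of_deriv_le_two_mul_sqrt {f f' : ℝ → ℝ} {a b A c : ℝ}
    (hf : ContinuousOn f (Icc a b)) (hf' : ∀ x ∈ Ico a b, HasDerivWithinAt f (f' x) (Ici x) x)
    (hbound : ∀ x ∈ Ico a b, f' x ≤ 2 * A * √(f x))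
    (hA : 0 ≤ A) (hc : 0 ≤ c) (ha : f a ≤ c ^ 2) :
    ∀ x ∈ Icc a b, f x ≤ (c + A * (x - a)) ^ 2 := by
  intro x hx
  have hbarrier : ∀ ε > (0 : ℝ), f x ≤ ((c + ε) + (A + ε) * (x - a)) ^ 2 := fun ε hε =>
    le_sq_of_deriv_le_two_mul_sqrt_of_lt hf hf' hbound (by positivity) (by positivity)
      (by linarith) (ha.trans (by gcongr; linarith)) x hx
  have hlim : Tendsto (fun ε : ℝ => ((c + ε) + (A + ε) * (x - a)) ^ 2) (𝓝[>] 0)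
      (𝓝 ((c + A * (x - a)) ^ 2)) := by
    have hcont : Continuous (fun ε : ℝ => ((c + ε) + (A + ε) * (x - a)) ^ 2) := by fun_prop
    simpa using (hcont.tendsto 0).mono_left nhdsWithin_le_nhds
  exact ge_of_tendsto hlim (eventually_nhdsWithin_of_forall hbarrier)

theorem sqrt_gronwall_general
    (A t₀ : ℝ) (hA : 0 ≤ A) (y : ℝ → ℝ)
    (hdiff : ∀ t ∈ Set.Icc (0 : ℝ) t₀, DifferentiableAt ℝ y t)
    (hpos : ∀ t ∈ Set.Icc (0 : ℝ) t₀, 0 ≤ y t)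
    (hderiv : ∀ t ∈ Set.Icc (0 : ℝ) t₀, deriv y t ≤ 2 * A * Real.sqrt (y t)) :
    ∀ t ∈ Set.Icc (0 : ℝ) t₀, y t ≤ (Real.sqrt (y 0) + A * t) ^ 2 := by
  intro t ht
  have hzero : (0 : ℝ) ∈ Icc 0 t₀ := ⟨le_rfl, ht.1.trans ht.2⟩
  have h := le_sq_of_deriv_le_two_mul_sqrt (f' := deriv y)
    (fun x hx => (hdiff x hx).continuousAt.continuousWithinAt)
    (fun x hx => (hdiff x (Ico_subset_Icc_self hx)).hasDerivAt.hasDerivWithinAt)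
    (fun x hx => hderiv x (Ico_subset_Icc_self hx))
    hA (Real.sqrt_nonneg (y 0)) (Real.sq_sqrt (hpos 0 hzero)).ge t ht
  simpa using h

/-- **Square-root Gronwall comparison estimate**: if `y ≥ 0` is differentiable on
`[0, t₀]` with `y′ ≤ 2A√y` there (`A ≥ 0`), then `y t ≤ (√(y 0) + A·t)²` on `[0, t₀]`. -/
theorem sqrt_gronwall
    (A t₀ : ℝ) (hA : 0 ≤ A) (ht₀ : 0 < t₀) (y : ℝ → ℝ)
    (hdiff : ∀ t ∈ Set.Icc (0 : ℝ) t₀, DifferentiableAt ℝ y t)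
    (hpos : ∀ t ∈ Set.Icc (0 : ℝ) t₀, 0 ≤ y t)
    (hderiv : ∀ t ∈ Set.Icc (0 : ℝ) t₀, deriv y t ≤ 2 * A * Real.sqrt (y t)) :
    ∀ t ∈ Set.Icc (0 : ℝ) t₀, y t ≤ (Real.sqrt (y 0) + A * t) ^ 2 :=
  sqrt_gronwall_general A t₀ hA y hdiff hpos hderiv
end
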